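/- Let j be a positive half-integer, d = 2j+1, and 1 ≤ r < d. Then B_{j,r} ≥ ( r · Σ_{k=1}^{r} 1/(k(2j+1−k)) )^{−1}. -/

import Mathlib

open Matrix Kronecker BigOperators Finset
open scoped ComplexOrder

/-- Expectation value ⟨A⟩_ρ = Re tr(ρ A). -/
noncomputable def expval {n : Type*} [Fintype n] (ρ A : Matrix n n ℂ) : ℝ :=
  ((ρ * A).trace).re

/-- A density matrix: positive semidefinite with unit trace. -/
def IsDensityMatrix {n : Type*} [Fintype n] (ρ : Matrix n n ℂ) : Prop :=
  ρ.PosSemidef ∧ ρ.trace = 1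

/-- The projector |v⟩⟨v| associated to a vector. -/
noncomputable def pureState {n : Type*} (v : n → ℂ) : Matrix n n ℂ :=
  Matrix.vecMulVec v (star v)

/-- A normalized vector. -/
def IsUnitVec {n : Type*} [Fintype n] (v : n → ℂ) : Prop :=
  ∑ i, Complex.normSq (v i) = 1

/-- The canonical Hermitian operator basis of ℂ^d, indexed by pairs (j,k):
diagonal operators for j = k, real operators for j < k, imaginary operators for j > k. -/
noncomputable def canonG (d : ℕ) : Fin d × Fin d → Matrix (Fin d) (Fin d) ℂ := fun μ =>
  if μ.1 = μ.2 then Matrix.single μ.1 μ.1 1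
  else if μ.1 < μ.2 then
    ((Real.sqrt 2 : ℂ))⁻¹ • (Matrix.single μ.1 μ.2 1 + Matrix.single μ.2 μ.1 1)
  else
    (Complex.I * ((Real.sqrt 2 : ℂ))⁻¹) •
      (Matrix.single μ.2 μ.1 1 - Matrix.single μ.1 μ.2 1)

/-- Covariance matrix of a family of observables w.r.t. a state ρ. -/
noncomputable def covMat {n K : Type*} [Fintype n] (ρ : Matrix n n ℂ)
    (M : K → Matrix n n ℂ) : Matrix K K ℝ :=
  Matrix.of fun j k =>
    (1/2 : ℝ) * expval ρ (M j * M k + M k * M j) - expval ρ (M j) * expval ρ (M k)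

/-- The local observables (g_μ ⊗ 1, 1 ⊗ g_ν) on the bipartite space. -/
noncomputable def bipObs (d : ℕ) :
    (Fin d × Fin d) ⊕ (Fin d × Fin d) → Matrix (Fin d × Fin d) (Fin d × Fin d) ℂ :=
  Sum.elim (fun μ => canonG d μ ⊗ₖ (1 : Matrix (Fin d) (Fin d) ℂ))
           (fun ν => (1 : Matrix (Fin d) (Fin d) ℂ) ⊗ₖ canonG d ν)

/-- The full covariance matrix Γ_ρ of the canonical bipartite observables. -/
noncomputable def GammaCM (d : ℕ) (ρ : Matrix (Fin d × Fin d) (Fin d × Fin d) ℂ) :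
    Matrix ((Fin d × Fin d) ⊕ (Fin d × Fin d)) ((Fin d × Fin d) ⊕ (Fin d × Fin d)) ℝ :=
  covMat ρ (bipObs d)

/-- The cross-covariance block X_ρ. -/
noncomputable def crossCov (d : ℕ) (ρ : Matrix (Fin d × Fin d) (Fin d × Fin d) ℂ) :
    Matrix (Fin d × Fin d) (Fin d × Fin d) ℝ :=
  Matrix.of fun μ ν =>
    expval ρ (canonG d μ ⊗ₖ canonG d ν)
      - expval ρ (canonG d μ ⊗ₖ 1) * expval ρ ((1 : Matrix (Fin d) (Fin d) ℂ) ⊗ₖ canonG d ν)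

/-- Reduced state on the first subsystem. -/
noncomputable def redA (d : ℕ) (ρ : Matrix (Fin d × Fin d) (Fin d × Fin d) ℂ) :
    Matrix (Fin d) (Fin d) ℂ :=
  Matrix.of fun i j => ∑ k, ρ (i, k) (j, k)

/-- Reduced state on the second subsystem. -/
noncomputable def redB (d : ℕ) (ρ : Matrix (Fin d × Fin d) (Fin d × Fin d) ℂ) :
    Matrix (Fin d) (Fin d) ℂ :=
  Matrix.of fun i j => ∑ k, ρ (k, i) (k, j)

/-- Purity tr(σ²) (real part). -/
noncomputable def purity {n : Type*} [Fintype n] (σ : Matrix n n ℂ) : ℝ :=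
  ((σ * σ).trace).re

/-- Trace norm of a real matrix: sum of its singular values, i.e. tr √(XᵀX). -/
noncomputable def traceNorm {n : Type*} [Fintype n] [DecidableEq n] (X : Matrix n n ℝ) : ℝ :=
  ((Matrix.posSemidef_conjTranspose_mul_self X).1.eigenvectorUnitary.1 *
    Matrix.diagonal (fun i => Real.sqrt ((Matrix.posSemidef_conjTranspose_mul_self X).1.eigenvalues i)) *
    (star (Matrix.posSemidef_conjTranspose_mul_self X).1.eigenvectorUnitary : Matrix n n ℝ)).trace

/-- Schmidt rank of a pure state vector is the rank of its coefficient matrix. -/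
def SchmidtRankLE (d r : ℕ) (v : Fin d × Fin d → ℂ) : Prop :=
  (Matrix.of fun j k : Fin d => v (j, k)).rank ≤ r

/-- Schmidt number at most r. -/
def SchmidtNumberLE (d r : ℕ) (ρ : Matrix (Fin d × Fin d) (Fin d × Fin d) ℂ) : Prop :=
  ∃ (n : ℕ) (p : Fin n → ℝ) (ψ : Fin n → (Fin d × Fin d → ℂ)),
    (∀ k, 0 ≤ p k) ∧ (∑ k, p k = 1) ∧ (∀ k, IsUnitVec (ψ k)) ∧
    (∀ k, SchmidtRankLE d r (ψ k)) ∧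
    ρ = ∑ k, (p k : ℂ) • pureState (ψ k)

/-- Variance of an observable in a state. -/
noncomputable def varState {n : Type*} [Fintype n] (σ A : Matrix n n ℂ) : ℝ :=
  expval σ (A * A) - (expval σ A)^2

/-- The magnetic quantum number m_k = k - j - 1 (0-indexed: k - (d-1)/2). -/
noncomputable def spinM (d : ℕ) (k : Fin d) : ℝ := (k : ℝ) - ((d : ℝ) - 1) / 2

/-- The raising operator j₊ for spin j = (d-1)/2. -/
noncomputable def spinPlus (d : ℕ) : Matrix (Fin d) (Fin d) ℂ :=
  Matrix.of fun a b => if (a : ℕ) = (b : ℕ) + 1 then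
    (Real.sqrt (((d : ℝ) - 1) / 2 * (((d : ℝ) - 1) / 2 + 1) - spinM d b * (spinM d b + 1)) : ℂ)
  else 0

/-- The spin operator j_x = (j₊ + j₋)/2. -/
noncomputable def spinX (d : ℕ) : Matrix (Fin d) (Fin d) ℂ :=
  (1 / 2 : ℂ) • (spinPlus d + (spinPlus d)ᴴ)

/-- The spin operator j_y = (j₊ - j₋)/(2i). -/
noncomputable def spinY (d : ℕ) : Matrix (Fin d) (Fin d) ℂ :=
  (-Complex.I / 2) • (spinPlus d - (spinPlus d)ᴴ)

/-- The spin operator j_z. -/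
noncomputable def spinZ (d : ℕ) : Matrix (Fin d) (Fin d) ℂ :=
  Matrix.diagonal fun k => (spinM d k : ℂ)

/-- The quantity Σ_{k=1}^{d-1} k(d-k)(√λ_k - √λ_{k+1})² (0-indexed λ). -/
noncomputable def spinVarSum (d : ℕ) (lam : Fin d → ℝ) : ℝ :=
  ∑ k ∈ Finset.range (d - 1),
    ((k : ℝ) + 1) * ((d : ℝ) - ((k : ℝ) + 1)) *
      (Real.sqrt (if h : k < d then lam ⟨k, h⟩ else 0) -
       Real.sqrt (if h : k + 1 < d then lam ⟨k + 1, h⟩ else 0)) ^ 2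

/-- The bound B_{j,r}: infimum of Σ_k k(d-k)(√λ_k - √λ_{k+1})² over probability
vectors λ ∈ ℝ^d with at most r nonzero entries, where d = 2j+1. -/
noncomputable def Bspin (d r : ℕ) : ℝ :=
  sInf { v : ℝ | ∃ lam : Fin d → ℝ, (∀ k, 0 ≤ lam k) ∧ (∑ k, lam k = 1) ∧
    (Finset.univ.filter fun k => lam k ≠ 0).card ≤ r ∧ v = spinVarSum d lam }

/-!
If `λ` is supported on at most `r` points, its largest entry satisfies `λ m ≥ 1 / r`, and by
pigeonhole some `λ z = 0` with `|z - m| ≤ r`. Telescoping `√λ` between `z` and `m` and applying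
Cauchy–Schwarz with the weights `w k = (k + 1) (d - k - 1)` gives
`λ m ≤ (∑_{k between z and m} 1 / w k) · ∑_k w k (√λ_k - √λ_{k+1})²`. The weights `1 / w k` are
symmetric about the middle of `[0, d - 1)` and decrease towards it, so a window of at most `r`
of them sums to at most `∑_{k < r} 1 / w k`.
-/

namespace Spin

theorem sum_Ico_add_le_sum_range {M : Type*} [AddCommGroup M] [PartialOrder M]
    [IsOrderedAddMonoid M] (g : ℕ → M) (t : ℕ) :
    ∀ n, (∀ p < n, g (p + t) ≤ g p) → ∑ k ∈ Ico n (n + t), g k ≤ ∑ k ∈ range t, g k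
  | 0, _ => by rw [zero_add, Nat.Ico_zero_eq_range]
  | n + 1, h => by
    have hslide : ∑ k ∈ Ico (n + 1) (n + 1 + t), g k + g n =
        ∑ k ∈ Ico n (n + t), g k + g (n + t) := by
      rw [add_comm, ← sum_eq_sum_Ico_succ_bot (by omega), n.add_right_comm,
        sum_Ico_succ_top (by omega)]
    have hstep : g (n + t) ≤ g n := h n (by omega)
    have hrec := sum_Ico_add_le_sum_range g t n fun p hp => h p (by omega)
    exact (le_of_add_le_add_right (hslide.trans_le (add_le_add_right hstep _))).trans hrec

theorem sq_sub_le_sum_inv_mul_sum_mul_sq {R : Type*} [Field R] [LinearOrder R]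
    [IsStrictOrderedRing R] (a w : ℕ → R) {p q : ℕ} (hpq : p ≤ q)
    (hw : ∀ k ∈ Ico p q, 0 < w k) :
    (a p - a q) ^ 2 ≤
      (∑ k ∈ Ico p q, 1 / w k) * ∑ k ∈ Ico p q, w k * (a k - a (k + 1)) ^ 2 := by
  have htelescope : ∑ k ∈ Ico p q, (a k - a (k + 1)) = a p - a q := by
    rw [← neg_sub, ← sum_Ico_sub a hpq, ← sum_neg_distrib]
    simp only [neg_sub]
  rw [← htelescope]
  refine sum_sq_le_sum_mul_sum_of_sq_le_mul _ (fun k hk => (one_div_pos.2 (hw k hk)).le)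
    (fun k hk => mul_nonneg (hw k hk).le (sq_nonneg _)) fun k hk => ?_
  rw [← mul_assoc, one_div_mul_cancel (hw k hk).ne', one_mul]

theorem exists_one_le_mul_of_card_support_le {ι : Type*} [Fintype ι] {lam : ι → ℝ} {r : ℕ}
    (hsum : ∑ i, lam i = 1) (hcard : (univ.filter fun i => lam i ≠ 0).card ≤ r) :
    ∃ m, 1 ≤ (r : ℝ) * lam m := by
  classical
  set S := univ.filter fun i => lam i ≠ 0
  have hS : ∑ i ∈ S, lam i = 1 := by rw [sum_filter_ne_zero, hsum]
  obtain ⟨m, -, hmax⟩ := S.exists_max_image lam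
    (nonempty_of_sum_ne_zero (by rw [hS]; exact one_ne_zero))
  have hle : 1 ≤ (S.card : ℝ) * lam m := by
    simpa [hS] using sum_le_card_nsmul S lam (lam m) hmax
  have hm : 0 ≤ lam m := (pos_of_mul_pos_right (one_pos.trans_le hle) (by positivity)).le
  exact ⟨m, hle.trans (by gcongr)⟩

theorem exists_eq_zero_near {d r : ℕ} {lam : Fin d → ℝ} (hrd : r < d)
    (hcard : (univ.filter fun i => lam i ≠ 0).card ≤ r) (m : Fin d) :
    ∃ z : Fin d, lam z = 0 ∧ (z : ℕ) ≤ m + r ∧ (m : ℕ) ≤ z + r := by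
  -- pigeonhole in the window `[lo, lo + r] ⊆ [0, d)` of `r + 1` indices, which contains `m`
  set lo := min (m : ℕ) (d - 1 - r)
  have hm : lo ≤ m ∧ (m : ℕ) ≤ lo + r := by omega
  obtain ⟨e, he, heS⟩ := exists_mem_notMem_of_card_lt_card
    (s := (univ.filter fun i => lam i ≠ 0).map Fin.valEmbedding) (t := Icc lo (lo + r))
    (by simp only [card_map, Nat.card_Icc]; omega)
  rw [mem_Icc] at he
  have hed : e < d := by omega
  refine ⟨⟨e, hed⟩, ?_, by simp only; omega, by simp only; omega⟩
  by_contra hne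
  exact heS (mem_map.2 ⟨⟨e, hed⟩, by simpa using hne, rfl⟩)

noncomputable def spinWeight (d k : ℕ) : ℝ := ((k : ℝ) + 1) * ((d : ℝ) - ((k : ℝ) + 1))

variable {d : ℕ}

theorem spinWeight_pos {k : ℕ} (h : k + 2 ≤ d) : 0 < spinWeight d k := by
  have : (k : ℝ) + 2 ≤ d := by exact_mod_cast h
  unfold spinWeight; nlinarith

theorem one_div_spinWeight_pos {k : ℕ} (h : k + 2 ≤ d) : 0 < 1 / spinWeight d k :=
  one_div_pos.2 (spinWeight_pos h)

theorem spinWeight_reflect {k : ℕ} (h : k + 2 ≤ d) :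
    spinWeight d (d - 2 - k) = spinWeight d k := by
  unfold spinWeight
  rw [Nat.cast_sub (by omega), Nat.cast_sub (by omega)]
  push_cast; ring

theorem spinWeight_le_add {p t : ℕ} (h : 2 * p + t + 2 ≤ d) :
    spinWeight d p ≤ spinWeight d (p + t) := by
  have : 2 * (p : ℝ) + t + 2 ≤ d := by exact_mod_cast h
  unfold spinWeight; push_cast
  nlinarith [(t.cast_nonneg : (0 : ℝ) ≤ t)]

theorem sum_Ico_inv_spinWeight_le_sum_range {p t : ℕ} (h : p + t + 1 ≤ d) :
    ∑ k ∈ Ico p (p + t), 1 / spinWeight d k ≤ ∑ k ∈ range t, 1 / spinWeight d k := by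
  have hslide : ∀ n, 2 * n + t ≤ d →
      ∑ k ∈ Ico n (n + t), 1 / spinWeight d k ≤ ∑ k ∈ range t, 1 / spinWeight d k :=
    fun n hn => sum_Ico_add_le_sum_range _ t n fun q hq =>
      one_div_le_one_div_of_le (spinWeight_pos (by omega)) (spinWeight_le_add (by omega))
  rcases le_or_gt (2 * p + t) d with hp | hp
  · exact hslide p hp
  have hreflect : ∑ k ∈ Ico p (p + t), 1 / spinWeight d k =
      ∑ k ∈ Ico (d - 1 - (p + t)) (d - 1 - (p + t) + t), 1 / spinWeight d k := by
    calc ∑ k ∈ Ico p (p + t), 1 / spinWeight d k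
        = ∑ k ∈ Ico p (p + t), 1 / spinWeight d (d - 2 - k) :=
          sum_congr rfl fun k hk => by rw [spinWeight_reflect (by simp at hk; omega)]
      _ = ∑ k ∈ Ico (d - 2 + 1 - (p + t)) (d - 2 + 1 - p), 1 / spinWeight d k :=
          sum_Ico_reflect (fun j => 1 / spinWeight d j) p (by omega : p + t ≤ d - 2 + 1)
      _ = _ := by
        rw [show d - 2 + 1 - (p + t) = d - 1 - (p + t) by omega,
          show d - 2 + 1 - p = d - 1 - (p + t) + t by omega]
  exact hreflect ▸ hslide _ (by omega)

noncomputable def natSeq (lam : Fin d → ℝ) (k : ℕ) : ℝ :=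
  if h : k < d then lam ⟨k, h⟩ else 0

@[simp]
theorem natSeq_val (lam : Fin d → ℝ) (i : Fin d) : natSeq lam i = lam i := by
  simp [natSeq]

theorem spinVarSum_eq_sum_spinWeight (lam : Fin d → ℝ) :
    spinVarSum d lam = ∑ k ∈ range (d - 1),
      spinWeight d k * (√(natSeq lam k) - √(natSeq lam (k + 1))) ^ 2 := rfl

theorem sum_Ico_le_spinVarSum {lam : Fin d → ℝ} {p q : ℕ} (hq : q ≤ d - 1) :
    ∑ k ∈ Ico p q, spinWeight d k * (√(natSeq lam k) - √(natSeq lam (k + 1))) ^ 2 ≤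
      spinVarSum d lam := by
  rw [spinVarSum_eq_sum_spinWeight]
  refine sum_le_sum_of_subset_of_nonneg (fun k hk => by simp at hk ⊢; omega) fun k hk _ => ?_
  exact mul_nonneg (spinWeight_pos (by simp at hk; omega)).le (sq_nonneg _)

theorem sq_sub_sqrt_le_mul_spinVarSum {r : ℕ} {lam : Fin d → ℝ} (hrd : r < d) {p q : ℕ}
    (hpq : p ≤ q) (hqd : q < d) (hqp : q ≤ p + r) :
    (√(natSeq lam p) - √(natSeq lam q)) ^ 2 ≤
      (∑ k ∈ range r, 1 / spinWeight d k) * spinVarSum d lam := by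
  have hwindow : ∑ k ∈ Ico p q, 1 / spinWeight d k ≤ ∑ k ∈ range r, 1 / spinWeight d k :=
    calc ∑ k ∈ Ico p q, 1 / spinWeight d k
        = ∑ k ∈ Ico p (p + (q - p)), 1 / spinWeight d k := by rw [Nat.add_sub_cancel' hpq]
      _ ≤ ∑ k ∈ range (q - p), 1 / spinWeight d k :=
          sum_Ico_inv_spinWeight_le_sum_range (by omega)
      _ ≤ ∑ k ∈ range r, 1 / spinWeight d k :=
          sum_le_sum_of_subset_of_nonneg (range_subset_range.2 (by omega)) fun k hk _ =>
            (one_div_spinWeight_pos (by simp at hk; omega)).le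
  calc (√(natSeq lam p) - √(natSeq lam q)) ^ 2
      ≤ (∑ k ∈ Ico p q, 1 / spinWeight d k) * ∑ k ∈ Ico p q,
          spinWeight d k * (√(natSeq lam k) - √(natSeq lam (k + 1))) ^ 2 :=
        sq_sub_le_sum_inv_mul_sum_mul_sq (fun k => √(natSeq lam k)) (spinWeight d) hpq
          fun k hk => spinWeight_pos (by simp at hk; omega)
    _ ≤ (∑ k ∈ range r, 1 / spinWeight d k) * spinVarSum d lam :=
        mul_le_mul hwindow (sum_Ico_le_spinVarSum (by omega))
          (sum_nonneg fun k hk => mul_nonneg (spinWeight_pos (by simp at hk; omega)).le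
            (sq_nonneg _))
          (sum_nonneg fun k hk => (one_div_spinWeight_pos (by simp at hk; omega)).le)

theorem inv_mul_sum_le_spinVarSum {r : ℕ} {lam : Fin d → ℝ} (hr : 1 ≤ r) (hrd : r < d)
    (hsum : ∑ i, lam i = 1) (hcard : (univ.filter fun i => lam i ≠ 0).card ≤ r) :
    ((r : ℝ) * ∑ k ∈ range r, 1 / spinWeight d k)⁻¹ ≤ spinVarSum d lam := by
  set C := ∑ k ∈ range r, 1 / spinWeight d k
  obtain ⟨m, hm⟩ := exists_one_le_mul_of_card_support_le hsum hcard
  have hm0 : 0 ≤ lam m := (pos_of_mul_pos_right (one_pos.trans_le hm) (by positivity)).le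
  obtain ⟨z, hz, hzm, hmz⟩ := exists_eq_zero_near hrd hcard m
  have hmC : lam m ≤ C * spinVarSum d lam := by
    have hsq : (√(natSeq lam m) - √(natSeq lam z)) ^ 2 = lam m := by
      rw [natSeq_val, natSeq_val, hz, Real.sqrt_zero, sub_zero, Real.sq_sqrt hm0]
    rcases le_total (z : ℕ) m with h | h
    · rw [← hsq, ← neg_sub, neg_sq]
      exact sq_sub_sqrt_le_mul_spinVarSum hrd h m.isLt hmz
    · rw [← hsq]
      exact sq_sub_sqrt_le_mul_spinVarSum hrd h z.isLt hzm
  have hC : 0 < C :=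
    sum_pos (fun k hk => one_div_spinWeight_pos (by simp at hk; omega)) ⟨0, mem_range.2 hr⟩
  rw [inv_le_iff_one_le_mul₀ (by positivity)]
  calc (1 : ℝ) ≤ r * lam m := hm
    _ ≤ r * (C * spinVarSum d lam) := by gcongr
    _ = spinVarSum d lam * (r * C) := by ring

end Spin

theorem Bspin_lower_bound_harmonic_general
    (d r : ℕ) (hr : 1 ≤ r) (hrd : r < d) :
    ((r : ℝ) * ∑ k ∈ Finset.range r, 1 / (((k : ℝ) + 1) * ((d : ℝ) - ((k : ℝ) + 1))))⁻¹ ≤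
      Bspin d r := by
  set δ : Fin d → ℝ := Pi.single ⟨0, by omega⟩ 1
  have hδ : 0 ≤ δ := Pi.single_nonneg.2 zero_le_one
  refine le_csInf
    ⟨_, δ, hδ, by simp [δ], by simpa [δ, Pi.single_apply, filter_eq'] using hr, rfl⟩ ?_
  rintro v ⟨lam, -, hsum, hcard, rfl⟩
  exact Spin.inv_mul_sum_le_spinVarSum hr hrd hsum hcard

/-- B_{j,r} ≥ ( r · Σ_{k=1}^r 1/(k(2j+1-k)) )⁻¹, where d = 2j+1. -/
theorem Bspin_lower_bound_harmonic
    (d r : ℕ) (hd : 2 ≤ d) (hr : 1 ≤ r) (hrd : r < d) :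
    ((r : ℝ) * ∑ k ∈ Finset.range r, 1 / (((k : ℝ) + 1) * ((d : ℝ) - ((k : ℝ) + 1))))⁻¹ ≤
      Bspin d r :=
  Bspin_lower_bound_harmonic_general d r hr hrd
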